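/- Let r≥2 be an integer and F(x)=d(x)+(1/r)d(rx) for x∈[0,1], where d(x)=dist(x,ℤ). Then (r/(r-1))·x(1-x) ≤ F(x) for all x∈[0,1]. -/
import Mathlib


/-- `C_p(ℝ)`: continuous, periodic with period 1, vanishing at 0. -/
def IsCp (f : ℝ → ℝ) : Prop := Continuous f ∧ (∀ x, f (x + 1) = f x) ∧ f 0 = 0

/-- Forward difference δ⁺_{n,k}(y;f). -/
noncomputable def delP (r : ℕ) (f : ℝ → ℝ) (n : ℕ) (k : ℤ) (y : ℝ) : ℝ :=
  (f (((k : ℝ) + 1) / (r : ℝ) ^ n) - f (((k : ℝ) + y) / (r : ℝ) ^ n)) / ((1 - y) / (r : ℝ) ^ n)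

/-- Backward difference δ⁻_{n,k}(y;f). -/
noncomputable def delM (r : ℕ) (f : ℝ → ℝ) (n : ℕ) (k : ℤ) (y : ℝ) : ℝ :=
  (f (((k : ℝ) + y) / (r : ℝ) ^ n) - f ((k : ℝ) / (r : ℝ) ^ n)) / (y / (r : ℝ) ^ n)

/-- Second-order central difference Δ_{n,k}(y;f). -/
noncomputable def Del (r : ℕ) (f : ℝ → ℝ) (n : ℕ) (k : ℤ) (y : ℝ) : ℝ :=
  2 * (r : ℝ) ^ n * (delP r f n k y - delM r f n k y)

/-- The operator U: U_ψ(x) = Σ_{j≥0} ψ(rʲx)/rʲ. -/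
noncomputable def Uop (r : ℕ) (ψ : ℝ → ℝ) (x : ℝ) : ℝ := ∑' j : ℕ, ψ ((r : ℝ) ^ j * x) / (r : ℝ) ^ j

/-- Distance to the integers. -/
noncomputable def dZ (x : ℝ) : ℝ := Metric.infDist x (Set.range (Int.cast : ℤ → ℝ))

/-- The generalized Takagi function τ_r. -/
noncomputable def tak (r : ℕ) : ℝ → ℝ := Uop r dZ

/-- The class P_c: Δ_{n,k}(y;f) ≤ -2crⁿ for all admissible (n,k,y). -/
def memP (r : ℕ) (c : ℝ) (f : ℝ → ℝ) : Prop :=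
  ∀ (n : ℕ) (k : ℤ), 0 ≤ k → k ≤ (r : ℤ) ^ n - 1 →
    ∀ y ∈ Set.Ioo (0 : ℝ) 1, Del r f n k y ≤ -2 * c * (r : ℝ) ^ n

/-- The parabola q_f(t,x;z). -/
noncomputable def qf (f : ℝ → ℝ) (t x z : ℝ) : ℝ := f z + (x - z) ^ 2 / (2 * t)

lemma dZ_eq (x : ℝ) : dZ x = min (Int.fract x) (1 - Int.fract x) := by
  have hne : (Set.range (Int.cast : ℤ → ℝ)).Nonempty := ⟨(0:ℝ), ⟨0, by simp⟩⟩
  have hf : Int.fract x = x - ⌊x⌋ := rfl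
  apply le_antisymm
  · apply le_min
    · have h := Metric.infDist_le_dist_of_mem (x := x)
        (show ((⌊x⌋:ℤ):ℝ) ∈ Set.range (Int.cast : ℤ → ℝ) from ⟨⌊x⌋, rfl⟩)
      rw [Real.dist_eq, abs_of_nonneg (by linarith [Int.floor_le x])] at h
      rw [hf]; exact h
    · have h := Metric.infDist_le_dist_of_mem (x := x)
        (show (((⌊x⌋+1):ℤ):ℝ) ∈ Set.range (Int.cast : ℤ → ℝ) from ⟨⌊x⌋+1, rfl⟩)
      rw [Real.dist_eq, abs_of_nonpos (by push_cast; linarith [Int.lt_floor_add_one x])] at h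
      push_cast at h
      rw [hf]; unfold dZ; linarith
  · apply le_of_not_gt
    intro h
    obtain ⟨y, ⟨z, rfl⟩, hy⟩ := (Metric.infDist_lt_iff hne).mp h
    rw [Real.dist_eq] at hy
    rcases le_or_gt (z : ℝ) x with hz | hz
    · have hzf : (z:ℝ) ≤ ⌊x⌋ := by exact_mod_cast Int.le_floor.mpr (by exact_mod_cast hz)
      have h1 : Int.fract x ≤ |x - z| := by rw [abs_of_nonneg (by linarith), hf]; linarith
      have h2 := min_le_left (Int.fract x) (1 - Int.fract x)
      linarith
    · have hzf : (⌊x⌋:ℝ) + 1 ≤ z := by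
        exact_mod_cast Int.add_one_le_iff.mpr (Int.floor_lt.mpr hz)
      have h1 : 1 - Int.fract x ≤ |x - z| := by
        rw [abs_of_nonpos (by linarith), hf]; linarith
      have h2 := min_le_right (Int.fract x) (1 - Int.fract x)
      linarith

lemma dZ_nonneg (x : ℝ) : 0 ≤ dZ x := Metric.infDist_nonneg

lemma dZ_parab {u : ℝ} (h0 : 0 ≤ u) (h1 : u ≤ 1) : u * (1 - u) ≤ dZ u := by
  rcases eq_or_lt_of_le h1 with rfl | h1
  · simpa using dZ_nonneg 1
  · rw [dZ_eq, Int.fract_eq_self.mpr ⟨h0, h1⟩]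
    rcases le_total u (1 - u) with h | h
    · rw [min_eq_left h]; nlinarith
    · rw [min_eq_right h]; nlinarith

lemma dZ_sub_int (x : ℝ) (n : ℤ) : dZ (x - n) = dZ x := by
  rw [dZ_eq, dZ_eq, show x - (n:ℝ) = x + (-n : ℤ) by push_cast; ring, Int.fract_add_intCast]

lemma dZ_neg (x : ℝ) : dZ (-x) = dZ x := by
  rw [dZ_eq, dZ_eq]
  rcases eq_or_ne (Int.fract x) 0 with h | h
  · rw [h, Int.fract_neg_eq_zero.mpr h]
  · rw [Int.fract_neg h]; rw [min_comm]; ring_nf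

theorem stmt10 (r : ℕ) (hr : 2 ≤ r) :
    ∀ x ∈ Set.Icc (0:ℝ) 1,
      (r:ℝ) / ((r:ℝ) - 1) * (x * (1 - x)) ≤ dZ x + dZ ((r:ℝ) * x) / (r:ℝ) := by
  rintro x ⟨hx0, hx1⟩
  have hr2 : (2:ℝ) ≤ (r:ℝ) := by exact_mod_cast hr
  have hrpos : (0:ℝ) < r := by linarith
  have hr1 : (0:ℝ) < (r:ℝ) - 1 := by linarith
  have key : ∀ t : ℝ, 0 ≤ t → t ≤ 1/2 → ∀ D : ℝ, 0 ≤ D →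
      ((r:ℝ) * t ≤ 1 → (r:ℝ) * t * (1 - (r:ℝ) * t) ≤ D) →
      (r:ℝ) / ((r:ℝ) - 1) * (t * (1 - t)) ≤ t + D / r := by
    intro t ht0 ht2 D hD hDb
    rw [div_mul_eq_mul_div, div_le_iff₀ hr1]
    rcases le_or_gt ((r:ℝ) * t) 1 with hrt | hrt
    · have hD2 := hDb hrt
      have hE : t * (1 - (r:ℝ) * t) ≤ D / r := (le_div_iff₀ hrpos).mpr (by nlinarith)
      nlinarith [mul_nonneg ht0 (mul_nonneg (by linarith : (0:ℝ) ≤ (r:ℝ) - 2)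
        (by linarith : (0:ℝ) ≤ 1 - (r:ℝ) * t))]
    · have hD0 : 0 ≤ D / r := div_nonneg hD hrpos.le
      nlinarith [mul_nonneg ht0 (by linarith : (0:ℝ) ≤ (r:ℝ) * t - 1)]
  rcases le_or_gt x (1/2 : ℝ) with hx | hx
  · have hdx : dZ x = x := by
      rw [dZ_eq, Int.fract_eq_self.mpr ⟨hx0, by linarith⟩, min_eq_left (by linarith)]
    have := key x hx0 hx (dZ ((r:ℝ) * x)) (dZ_nonneg _)
      (fun h => dZ_parab (by positivity) h)
    rw [hdx]
    linarith
  · set t : ℝ := 1 - x with ht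
    have ht0 : 0 ≤ t := by linarith
    have ht2 : t ≤ 1/2 := by linarith
    have hdx : dZ x = t := by
      rcases eq_or_lt_of_le hx1 with rfl | hx1'
      · rw [dZ_eq, Int.fract_one]; norm_num [ht]
      · rw [dZ_eq, Int.fract_eq_self.mpr ⟨hx0, hx1'⟩, min_eq_right (by linarith)]
    have hdrx : dZ ((r:ℝ) * x) = dZ ((r:ℝ) * t) := by
      have h1 : dZ ((r:ℝ) * x - ((r:ℤ):ℝ)) = dZ ((r:ℝ) * x) := dZ_sub_int _ _
      have h2 : (r:ℝ) * x - ((r:ℤ):ℝ) = -((r:ℝ) * t) := by push_cast [ht]; ring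
      rw [← h1, h2, dZ_neg]
    have := key t ht0 ht2 (dZ ((r:ℝ) * t)) (dZ_nonneg _)
      (fun h => dZ_parab (by positivity) h)
    rw [hdx, hdrx]
    have hx' : x * (1 - x) = t * (1 - t) := by rw [ht]; ring
    rw [hx']
    linarith
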